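/- Let n ≥ 2, let K ∈ 𝒦₀(ℝⁿ), and let Λ be a nonnegative real-valued random variable with E[Λⁿ] < ∞. Then E[ |{x ∈ ℝⁿ : rdist(x,K) ≤ Λ}| ] = Σ_{j=0}^{n} Ṽ_j(K) · |D_{n−j}| · E[Λ^{n−j}] (the dual stochastic Wills formula), where |A| denotes Lebesgue measure. -/
import Mathlib


open MeasureTheory

open MeasureTheory

/-- The uniform (rotation invariant) probability measure `σ` on the unit sphere
`S^{n-1} ⊆ ℝⁿ`. -/
noncomputable def sphereProb (n : ℕ) :
    Measure (Metric.sphere (0 : EuclideanSpace ℝ (Fin n)) 1) :=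
  ((volume : Measure (EuclideanSpace ℝ (Fin n))).toSphere Set.univ)⁻¹ •
    (volume : Measure (EuclideanSpace ℝ (Fin n))).toSphere

/-- The radial function `ρ_K(u) = max {r : r • u ∈ K}` of a set `K ⊆ ℝⁿ`. -/
noncomputable def radialFn {n : ℕ} (K : Set (EuclideanSpace ℝ (Fin n)))
    (u : EuclideanSpace ℝ (Fin n)) : ℝ :=
  sSup {r : ℝ | r • u ∈ K}

/-- The minimal radial distance `rdist(x, K)`:  `0` if `x ∈ K`, and
`‖x‖ - ρ_K(x/‖x‖)` otherwise. -/
noncomputable def rdist {n : ℕ} (K : Set (EuclideanSpace ℝ (Fin n)))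
    (x : EuclideanSpace ℝ (Fin n)) : ℝ :=
  letI := Classical.dec (x ∈ K)
  if x ∈ K then 0 else ‖x‖ - radialFn K (‖x‖⁻¹ • x)

/-- `|D_k| = π^{k/2} / Γ(k/2 + 1)`, the volume of the `k`-dimensional unit ball. -/
noncomputable def unitBallVolF (k : ℕ) : ℝ :=
  Real.pi ^ ((k : ℝ) / 2) / Real.Gamma ((k : ℝ) / 2 + 1)

/-- The `j`-th dual volume `Ṽ_j(K) = C(n,j)·(|Dₙ|/|D_{n-j}|)·∫_{S^{n-1}} ρ_K(u)^j dσ(u)`. -/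
noncomputable def dualVolInt (n j : ℕ) (K : Set (EuclideanSpace ℝ (Fin n))) : ℝ :=
  (n.choose j : ℝ) * (unitBallVolF n / unitBallVolF (n - j)) *
    ∫ u : Metric.sphere (0 : EuclideanSpace ℝ (Fin n)) 1,
      radialFn K ↑u ^ j ∂(sphereProb n)


open Metric Set

variable {n : ℕ} {K : Set (EuclideanSpace ℝ (Fin n))}

lemma radial_smul_mem (hKcp : IsCompact K) (hK0 : (0:EuclideanSpace ℝ (Fin n)) ∈ K)
    {u : EuclideanSpace ℝ (Fin n)} (hu : ‖u‖ = 1) :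
    radialFn K u • u ∈ K := by
  obtain ⟨R, hR⟩ := hKcp.isBounded.subset_closedBall 0
  have hcl : IsClosed {r : ℝ | r • u ∈ K} :=
    hKcp.isClosed.preimage (by fun_prop)
  have hsub : {r : ℝ | r • u ∈ K} ⊆ Icc (-R) R := by
    intro r hr
    have := hR hr
    rw [mem_closedBall_zero_iff, norm_smul, hu, mul_one] at this
    exact abs_le.1 this
  have hcp : IsCompact {r : ℝ | r • u ∈ K} :=
    isCompact_Icc.of_isClosed_subset hcl hsub
  have hne : {r : ℝ | r • u ∈ K}.Nonempty := ⟨0, by simpa using hK0⟩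
  exact hcp.sSup_mem hne

lemma le_radial (hKcp : IsCompact K)
    {u : EuclideanSpace ℝ (Fin n)} (hu : ‖u‖ = 1) {r : ℝ} (hr : r • u ∈ K) :
    r ≤ radialFn K u := by
  obtain ⟨R, hR⟩ := hKcp.isBounded.subset_closedBall 0
  refine le_csSup ⟨R, fun s hs => ?_⟩ hr
  have := hR hs
  rw [mem_closedBall_zero_iff, norm_smul, hu, mul_one] at this
  exact (abs_le.1 this).2

lemma radial_pos (hKcp : IsCompact K) (hKint : 0 ∈ interior K)
    {u : EuclideanSpace ℝ (Fin n)} (hu : ‖u‖ = 1) :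
    0 < radialFn K u := by
  obtain ⟨ε, hε, hball⟩ := Metric.isOpen_iff.1 isOpen_interior 0 hKint
  have h2 : (ε/2) • u ∈ K := by
    apply interior_subset
    apply hball
    rw [mem_ball_zero_iff, norm_smul, hu, mul_one, Real.norm_eq_abs, abs_of_pos (half_pos hε)]
    exact half_lt_self hε
  exact lt_of_lt_of_le (half_pos hε) (le_radial hKcp hu h2)

lemma radial_smul_mem_of_le (hKcp : IsCompact K) (hKcv : Convex ℝ K)
    (hK0 : (0:EuclideanSpace ℝ (Fin n)) ∈ K)
    {u : EuclideanSpace ℝ (Fin n)} (hu : ‖u‖ = 1) {r : ℝ} (h0 : 0 ≤ r)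
    (hr : r ≤ radialFn K u) : r • u ∈ K := by
  have hmem := radial_smul_mem hKcp hK0 hu
  rcases eq_or_lt_of_le h0 with h | h
  · simpa [← h] using hK0
  have hρ : 0 < radialFn K u := lt_of_lt_of_le h hr
  have : (r / radialFn K u) • (radialFn K u • u) ∈ K :=
    hKcv.smul_mem_of_zero_mem hK0 hmem
      ⟨div_nonneg h0 hρ.le, (div_le_one hρ).2 hr⟩
  rwa [smul_smul, div_mul_cancel₀ _ hρ.ne'] at this

open Pointwise in

lemma gauge_eq_inv_radial (hKcp : IsCompact K) (hKcv : Convex ℝ K) (hKint : 0 ∈ interior K)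
    {u : EuclideanSpace ℝ (Fin n)} (hu : ‖u‖ = 1) :
    gauge K u = (radialFn K u)⁻¹ := by
  have hK0 : (0:EuclideanSpace ℝ (Fin n)) ∈ K := interior_subset hKint
  have hρ : 0 < radialFn K u := radial_pos hKcp hKint hu
  have hset : {r : ℝ | 0 < r ∧ u ∈ r • K} = Ici (radialFn K u)⁻¹ := by
    ext r
    simp only [mem_setOf_eq, mem_Ici]
    constructor
    · rintro ⟨hr, hmem⟩
      rw [mem_smul_set_iff_inv_smul_mem₀ hr.ne'] at hmem
      have := le_radial hKcp hu hmem
      exact (inv_le_comm₀ hρ hr).2 (le_radial hKcp hu hmem)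
    · intro hge
      have hr : 0 < r := lt_of_lt_of_le (inv_pos.2 hρ) hge
      refine ⟨hr, ?_⟩
      rw [mem_smul_set_iff_inv_smul_mem₀ hr.ne']
      exact radial_smul_mem_of_le hKcp hKcv hK0 hu (inv_nonneg.2 hr.le)
        ((inv_le_comm₀ hr hρ).2 hge)
  rw [gauge_def]
  rw [show {r | r ∈ Ioi (0:ℝ) ∧ u ∈ r • K} = {r : ℝ | 0 < r ∧ u ∈ r • K} from rfl, hset, csInf_Ici]

lemma radial_cont (hKcp : IsCompact K) (hKcv : Convex ℝ K) (hKint : 0 ∈ interior K) :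
    Continuous (fun u : sphere (0 : EuclideanSpace ℝ (Fin n)) 1 => radialFn K u.1) := by
  have hg : Continuous (gauge K) := continuous_gauge hKcv (mem_interior_iff_mem_nhds.1 hKint)
  have heq : ∀ u : sphere (0 : EuclideanSpace ℝ (Fin n)) 1,
      radialFn K u.1 = (gauge K u.1)⁻¹ := fun u => by
    rw [gauge_eq_inv_radial hKcp hKcv hKint (mem_sphere_zero_iff_norm.1 u.2), inv_inv]
  simp only [heq]
  refine (hg.comp continuous_subtype_val).inv₀ fun u => ?_
  show gauge K u.1 ≠ 0
  rw [gauge_eq_inv_radial hKcp hKcv hKint (mem_sphere_zero_iff_norm.1 u.2)]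
  exact inv_ne_zero (radial_pos hKcp hKint (mem_sphere_zero_iff_norm.1 u.2)).ne'

lemma vol_rdist (hn : 1 ≤ n) (hKcp : IsCompact K) (hKcv : Convex ℝ K)
    (hKint : 0 ∈ interior K) {l : ℝ} (hl : 0 ≤ l) :
    volume {x : EuclideanSpace ℝ (Fin n) | rdist K x ≤ l} =
      ∫⁻ u : sphere (0 : EuclideanSpace ℝ (Fin n)) 1,
        ENNReal.ofReal ((radialFn K u.1 + l) ^ n / n) ∂((volume).toSphere) := by
  have hK0 : (0 : EuclideanSpace ℝ (Fin n)) ∈ K := interior_subset hKint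
  haveI : Nontrivial (EuclideanSpace ℝ (Fin n)) :=
    Module.nontrivial_of_finrank_pos (R := ℝ) (by rw [finrank_euclideanSpace_fin]; omega)
  set g : sphere (0 : EuclideanSpace ℝ (Fin n)) 1 → ℝ := fun u => radialFn K u.1 + l with hgdef
  have hgc : Continuous g := (radial_cont hKcp hKcv hKint).add continuous_const
  have hgpos : ∀ u, 0 < g u := fun u =>
    add_pos_of_pos_of_nonneg (radial_pos hKcp hKint (mem_sphere_zero_iff_norm.1 u.2)) hl
  set B : Set (EuclideanSpace ℝ (Fin n)) := {x | x ≠ 0 ∧ ‖x‖ ≤ radialFn K (‖x‖⁻¹ • x) + l} with hBdef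
  have hAB : {x : EuclideanSpace ℝ (Fin n) | rdist K x ≤ l} = B ∪ {0} := by
    ext x
    rcases eq_or_ne x 0 with rfl | hx
    · simp [rdist, hK0, hl]
    · have hux : ‖(‖x‖⁻¹ • x)‖ = 1 := by
        rw [norm_smul, norm_inv, norm_norm, inv_mul_cancel₀ (norm_ne_zero_iff.2 hx)]
      simp only [mem_setOf_eq, mem_union, mem_singleton_iff, hx, or_false, hBdef, rdist]
      constructor
      · intro h
        refine ⟨hx, ?_⟩
        split_ifs at h with hmem
        · have : ‖x‖ • (‖x‖⁻¹ • x) ∈ K := by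
            rwa [smul_inv_smul₀ (norm_ne_zero_iff.2 hx)]
          exact le_add_of_le_of_nonneg (le_radial hKcp hux this) hl
        · linarith [h]
      · rintro ⟨-, h⟩
        split_ifs with hmem
        · exact hl
        · linarith [h]
  have hφ := (volume : Measure (EuclideanSpace ℝ (Fin n))).measurePreserving_homeomorphUnitSphereProd
  set T : Set (sphere (0 : EuclideanSpace ℝ (Fin n)) 1 × Ioi (0 : ℝ)) := {p | p.2.1 ≤ g p.1} with hTdef
  have hT : MeasurableSet T := by
    apply measurableSet_le
    · exact (continuous_subtype_val.comp continuous_snd).measurable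
    · exact (hgc.comp continuous_fst).measurable
  have hpre : (homeomorphUnitSphereProd (EuclideanSpace ℝ (Fin n))) ⁻¹' T = (Subtype.val) ⁻¹' B := by
    ext ⟨x, hx⟩
    simp only [mem_preimage, hTdef, mem_setOf_eq, hBdef, hgdef, homeomorphUnitSphereProd_apply_snd_coe,
      homeomorphUnitSphereProd_apply_fst_coe]
    simp only [mem_compl_iff, mem_singleton_iff] at hx
    simp [hx]
  have hmdim : Module.finrank ℝ (EuclideanSpace ℝ (Fin n)) - 1 = n - 1 := by
    rw [finrank_euclideanSpace_fin]
  have hBvol : volume B = (volume.toSphere.prod (Measure.volumeIoiPow (n - 1))) T := by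
    have h1 : volume B = (volume.comap (Subtype.val : ({0}ᶜ : Set (EuclideanSpace ℝ (Fin n))) → EuclideanSpace ℝ (Fin n))) (Subtype.val ⁻¹' B) := by
      rw [comap_subtype_coe_apply (measurableSet_singleton (0 : EuclideanSpace ℝ (Fin n))).compl,
        Set.image_preimage_eq_inter_range, Subtype.range_coe]
      rw [eq_comm]
      congr 1
      rw [inter_eq_left]
      intro x hx
      exact hx.1
    rw [h1, ← hpre, ← hmdim]
    exact hφ.measure_preimage hT.nullMeasurableSet
  have hslice : ∀ u : sphere (0 : EuclideanSpace ℝ (Fin n)) 1,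
      (Measure.volumeIoiPow (n - 1)) (Prod.mk u ⁻¹' T) = ENNReal.ofReal (g u ^ n / n) := by
    intro u
    have hIic : Prod.mk u ⁻¹' T = Iic (⟨g u, hgpos u⟩ : Ioi (0:ℝ)) := by
      ext r
      simp [hTdef, Subtype.coe_le_coe]
      rfl
    have hsing : (Measure.volumeIoiPow (n - 1)) {(⟨g u, hgpos u⟩ : Ioi (0:ℝ))} = 0 := by
      rw [Measure.volumeIoiPow, withDensity_apply _ (measurableSet_singleton _)]
      have : (volume.comap (Subtype.val : Ioi (0:ℝ) → ℝ)) {(⟨g u, hgpos u⟩ : Ioi (0:ℝ))} = 0 := by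
        rw [comap_subtype_coe_apply measurableSet_Ioi]
        simp
      exact setLIntegral_measure_zero _ _ this
    have hIicm : (Measure.volumeIoiPow (n - 1)) (Iic (⟨g u, hgpos u⟩ : Ioi (0:ℝ)))
        = (Measure.volumeIoiPow (n - 1)) (Iio (⟨g u, hgpos u⟩ : Ioi (0:ℝ))) := by
      rw [← Iio_union_right]
      refine le_antisymm ?_ (measure_mono subset_union_left)
      calc (Measure.volumeIoiPow (n - 1)) (Iio (⟨g u, hgpos u⟩ : Ioi (0:ℝ)) ∪ {(⟨g u, hgpos u⟩ : Ioi (0:ℝ))})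
          ≤ (Measure.volumeIoiPow (n - 1)) (Iio (⟨g u, hgpos u⟩ : Ioi (0:ℝ))) + (Measure.volumeIoiPow (n - 1)) {(⟨g u, hgpos u⟩ : Ioi (0:ℝ))} := measure_union_le _ _
        _ = _ := by rw [hsing, add_zero]
    have hnn : n - 1 + 1 = n := Nat.succ_pred_eq_of_pos hn
    rw [hIic, hIicm, Measure.volumeIoiPow_apply_Iio]
    congr 1
    have hcast : ((n - 1 : ℕ) : ℝ) + 1 = (n : ℝ) := by
      rw [← Nat.cast_succ]
      exact_mod_cast Nat.cast_inj.mpr (hnn : (n-1).succ = n)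
    rw [hcast, hnn]
  have hU : volume (B ∪ ({0} : Set (EuclideanSpace ℝ (Fin n)))) = volume B := by
    refine le_antisymm ?_ (measure_mono subset_union_left)
    calc volume (B ∪ ({0} : Set (EuclideanSpace ℝ (Fin n))))
        ≤ volume B + volume ({0} : Set (EuclideanSpace ℝ (Fin n))) := measure_union_le _ _
      _ = volume B := by simp
  rw [hAB, hU, hBvol, Measure.prod_apply hT]
  exact lintegral_congr hslice

lemma unitBallVolF_pos (k : ℕ) : 0 < unitBallVolF k := by
  apply div_pos (Real.rpow_pos_of_pos Real.pi_pos _)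
  apply Real.Gamma_pos_of_pos
  positivity

lemma sqrt_pi_pow (k : ℕ) : Real.sqrt Real.pi ^ k = Real.pi ^ ((k : ℝ) / 2) := by
  rw [Real.sqrt_eq_rpow, ← Real.rpow_natCast (Real.pi ^ ((1:ℝ)/2)) k,
    ← Real.rpow_mul Real.pi_pos.le]
  congr 1
  ring

lemma toSphere_univ_toReal (hn : 1 ≤ n) :
    ((volume : Measure (EuclideanSpace ℝ (Fin n))).toSphere Set.univ).toReal
      = n * unitBallVolF n := by
  haveI : Nontrivial (EuclideanSpace ℝ (Fin n)) :=
    Module.nontrivial_of_finrank_pos (R := ℝ) (by rw [finrank_euclideanSpace_fin]; omega)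
  haveI : Nonempty (Fin n) := ⟨⟨0, by omega⟩⟩
  rw [Measure.toSphere_apply_univ, EuclideanSpace.volume_ball]
  simp only [finrank_euclideanSpace_fin, Fintype.card_fin, ENNReal.ofReal_one, one_pow, one_mul]
  rw [ENNReal.toReal_mul, ENNReal.toReal_natCast, ENNReal.toReal_ofReal (by positivity)]
  rw [unitBallVolF, sqrt_pi_pow]

lemma toSphere_univ_ne_top :
    ((volume : Measure (EuclideanSpace ℝ (Fin n))).toSphere Set.univ) ≠ ⊤ :=
  measure_ne_top _ _

lemma sphere_integrable {f : Metric.sphere (0 : EuclideanSpace ℝ (Fin n)) 1 → ℝ}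
    (hf : Continuous f) : Integrable f ((volume : Measure (EuclideanSpace ℝ (Fin n))).toSphere) := by
  haveI : CompactSpace (Metric.sphere (0 : EuclideanSpace ℝ (Fin n)) 1) :=
    isCompact_iff_compactSpace.1 (isCompact_sphere 0 1)
  exact hf.integrable_of_hasCompactSupport ((isClosed_tsupport f).isCompact)

lemma integral_toSphere_eq (hn : 1 ≤ n)
    (f : Metric.sphere (0 : EuclideanSpace ℝ (Fin n)) 1 → ℝ) :
    (∫ u, f u ∂((volume : Measure (EuclideanSpace ℝ (Fin n))).toSphere))
      = (n * unitBallVolF n) * ∫ u, f u ∂(sphereProb n) := by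
  rw [sphereProb, integral_smul_measure, ENNReal.toReal_inv, toSphere_univ_toReal hn,
    smul_eq_mul, ← mul_assoc,
    mul_inv_cancel₀ (mul_pos (Nat.cast_pos.mpr hn) (unitBallVolF_pos n)).ne', one_mul]

lemma vol_rdist_toReal (hn : 1 ≤ n) (hKcp : IsCompact K) (hKcv : Convex ℝ K)
    (hKint : 0 ∈ interior K) {l : ℝ} (hl : 0 ≤ l) :
    (volume {x : EuclideanSpace ℝ (Fin n) | rdist K x ≤ l}).toReal
      = ∑ j ∈ Finset.range (n + 1),
          (n.choose j : ℝ) * unitBallVolF n *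
            (∫ u : Metric.sphere (0 : EuclideanSpace ℝ (Fin n)) 1,
              radialFn K ↑u ^ j ∂(sphereProb n)) * l ^ (n - j) := by
  have hρc := radial_cont hKcp hKcv hKint
  have hgc : Continuous (fun u : Metric.sphere (0 : EuclideanSpace ℝ (Fin n)) 1 =>
      (radialFn K u.1 + l) ^ n / n) := ((hρc.add continuous_const).pow n).div_const n
  rw [vol_rdist hn hKcp hKcv hKint hl]
  rw [← integral_eq_lintegral_of_nonneg_ae
    (Filter.Eventually.of_forall (fun u => div_nonneg (pow_nonneg (add_nonneg
      (radial_pos hKcp hKint (mem_sphere_zero_iff_norm.1 u.2)).le hl) n) (Nat.cast_nonneg n)))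
    hgc.aestronglyMeasurable]
  have hnR : (0:ℝ) < n := Nat.cast_pos.mpr hn
  have hexp : (fun u : Metric.sphere (0 : EuclideanSpace ℝ (Fin n)) 1 =>
      (radialFn K u.1 + l) ^ n / n)
      = fun u => ∑ j ∈ Finset.range (n + 1),
          radialFn K u.1 ^ j * (l ^ (n - j) * (n.choose j : ℝ) / n) := by
    funext u
    rw [add_pow, Finset.sum_div]
    congr 1
    funext j
    ring
  rw [hexp, integral_finset_sum _ (fun j _ =>
    sphere_integrable (by
      exact ((hρc.pow j).mul continuous_const)))]
  refine Finset.sum_congr rfl fun j hj => ?_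
  rw [integral_mul_const, integral_toSphere_eq hn]
  field_simp

/-- Dual stochastic Wills formula: for a convex body `K ⊆ ℝⁿ` (`n ≥ 2`) containing the
origin in its interior and a nonnegative random variable `Λ` with `E[Λⁿ] < ∞`,
`E[ vol {x : rdist(x,K) ≤ Λ} ] = Σ_{j=0}^n Ṽ_j(K) · |D_{n-j}| · E[Λ^{n-j}]`. -/

theorem stmt9 {n : ℕ} (hn : 2 ≤ n)
    (K : Set (EuclideanSpace ℝ (Fin n)))
    (hKcp : IsCompact K) (hKcv : Convex ℝ K) (hKint : 0 ∈ interior K)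
    {Ω : Type*} [MeasurableSpace Ω] (μ : Measure Ω) [IsProbabilityMeasure μ]
    (Λ : Ω → ℝ) (hΛmeas : Measurable Λ) (hΛnonneg : ∀ ω, 0 ≤ Λ ω)
    (hΛint : Integrable (fun ω => Λ ω ^ n) μ) :
    (∫ ω, (volume {x : EuclideanSpace ℝ (Fin n) | rdist K x ≤ Λ ω}).toReal ∂μ)
      = ∑ j ∈ Finset.range (n + 1),
          dualVolInt n j K * unitBallVolF (n - j) * ∫ ω, Λ ω ^ (n - j) ∂μ := by
  have hn1 : 1 ≤ n := le_trans (by norm_num) hn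
  have hint : ∀ j : ℕ, j ≤ n → Integrable (fun ω => Λ ω ^ j) μ := by
    intro j hj
    refine Integrable.mono' ((integrable_const (1:ℝ)).add hΛint)
      (hΛmeas.pow_const j).aestronglyMeasurable ?_
    filter_upwards with ω
    rw [Real.norm_eq_abs, abs_of_nonneg (pow_nonneg (hΛnonneg ω) j)]
    simp only [Pi.add_apply]
    rcases le_total (Λ ω) 1 with h | h
    · have h1 : Λ ω ^ j ≤ 1 := pow_le_one₀ (hΛnonneg ω) h
      have h2 : 0 ≤ Λ ω ^ n := pow_nonneg (hΛnonneg ω) n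
      linarith
    · have h1 : Λ ω ^ j ≤ Λ ω ^ n := pow_le_pow_right₀ h hj
      linarith
  have hptw : ∀ ω, (volume {x : EuclideanSpace ℝ (Fin n) | rdist K x ≤ Λ ω}).toReal
      = ∑ j ∈ Finset.range (n + 1), (n.choose j : ℝ) * unitBallVolF n *
          (∫ u : Metric.sphere (0 : EuclideanSpace ℝ (Fin n)) 1,
            radialFn K ↑u ^ j ∂(sphereProb n)) * Λ ω ^ (n - j) :=
    fun ω => vol_rdist_toReal hn1 hKcp hKcv hKint (hΛnonneg ω)
  calc (∫ ω, (volume {x : EuclideanSpace ℝ (Fin n) | rdist K x ≤ Λ ω}).toReal ∂μ)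
      = ∫ ω, ∑ j ∈ Finset.range (n + 1), (n.choose j : ℝ) * unitBallVolF n *
          (∫ u : Metric.sphere (0 : EuclideanSpace ℝ (Fin n)) 1,
            radialFn K ↑u ^ j ∂(sphereProb n)) * Λ ω ^ (n - j) ∂μ := by
        simp only [hptw]
    _ = ∑ j ∈ Finset.range (n + 1), ∫ ω, (n.choose j : ℝ) * unitBallVolF n *
          (∫ u : Metric.sphere (0 : EuclideanSpace ℝ (Fin n)) 1,
            radialFn K ↑u ^ j ∂(sphereProb n)) * Λ ω ^ (n - j) ∂μ :=
        integral_finset_sum _ (fun j _ => ((hint (n - j) (Nat.sub_le n j)).const_mul _))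
    _ = ∑ j ∈ Finset.range (n + 1),
          dualVolInt n j K * unitBallVolF (n - j) * ∫ ω, Λ ω ^ (n - j) ∂μ := by
        refine Finset.sum_congr rfl fun j hj => ?_
        rw [integral_const_mul, dualVolInt]
        have hV := (unitBallVolF_pos (n - j)).ne'
        field_simp
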